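/- arXiv:2604.15274 — 6 statements merged into one kernel-verified Lean document; each statement's English description precedes it below -/
import Mathlib

section
/- For every mixed graph G without directed cycles, if G contains a directed path with ℓ+1 vertices (i.e., of length ℓ), then any two distinct vertices on this path have different mixed neighborhood types; consequently the mixed neighborhood diversity of G is at least ℓ+1. -/
structure MixedGraph (V : Type) where
  Edge : V → V → Prop
  Arc : V → V → Prop
  edge_symm : ∀ u v, Edge u v → Edge v u
  edge_irrefl : ∀ v, ¬ Edge v v
  arc_irrefl : ∀ v, ¬ Arc v v
  not_edge_arc : ∀ u v, Arc u v → ¬ Edge u v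

namespace MixedGraph

variable {V : Type}

/-- No directed cycles: the arc relation has no nontrivial closed walks. -/
def Acyclic (G : MixedGraph V) : Prop := ∀ v, ¬ Relation.TransGen G.Arc v v

def Nminus (G : MixedGraph V) (v : V) : Set V := {u | G.Arc u v}
def Nplus (G : MixedGraph V) (v : V) : Set V := {u | G.Arc v u}
def Nu (G : MixedGraph V) (v : V) : Set V := {u | G.Edge u v}

/-- Two vertices have the same mixed neighborhood type. -/
def SameType (G : MixedGraph V) (u v : V) : Prop :=
  G.Nminus u = G.Nminus v ∧ G.Nplus u = G.Nplus v ∧ G.Nu u \ {v} = G.Nu v \ {u}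

/-- Mixed neighborhood diversity: the number of mixed types. -/
noncomputable def ndm (G : MixedGraph V) : ℕ := Nat.card (Quot G.SameType)

/-- The underlying undirected graph: arcs become edges. -/
def underlying (G : MixedGraph V) : SimpleGraph V where
  Adj u v := G.Edge u v ∨ G.Arc u v ∨ G.Arc v u
  symm := by
    constructor
    intro u v h
    rcases h with h | h | h
    · exact Or.inl (G.edge_symm u v h)
    · exact Or.inr (Or.inr h)
    · exact Or.inr (Or.inl h)
  loopless := by
    constructor
    intro v h
    rcases h with h | h | h
    · exact G.edge_irrefl v h
    · exact G.arc_irrefl v h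
    · exact G.arc_irrefl v h

/-- Same type in the underlying undirected graph. -/
def USameType (G : MixedGraph V) (u v : V) : Prop :=
  G.underlying.neighborSet u \ {v} = G.underlying.neighborSet v \ {u}

/-- Neighborhood diversity of the underlying undirected graph. -/
noncomputable def ndu (G : MixedGraph V) : ℕ := Nat.card (Quot G.USameType)

/-- A proper coloring: distinct colors across edges, increasing along arcs. -/
def ProperColoring (G : MixedGraph V) (c : V → ℕ) : Prop :=
  (∀ u v, G.Edge u v → c u ≠ c v) ∧ (∀ u v, G.Arc u v → c u < c v)

/-- Chromatic number: least `k` admitting a proper coloring with colors `0,…,k-1`. -/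
noncomputable def chi (G : MixedGraph V) : ℕ :=
  sInf {k | ∃ c : V → ℕ, G.ProperColoring c ∧ ∀ v, c v < k}

/-- Maxrank: the length of a longest directed path. -/
noncomputable def Lambda (G : MixedGraph V) : ℕ :=
  sSup {ℓ | ∃ p : ℕ → V, ∀ i < ℓ, G.Arc (p i) (p (i + 1))}

/-- Inrank of a vertex: the length of a longest directed path ending in it. -/
noncomputable def inrank (G : MixedGraph V) (v : V) : ℕ :=
  sSup {ℓ | ∃ p : ℕ → V, p ℓ = v ∧ ∀ i < ℓ, G.Arc (p i) (p (i + 1))}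

/-- A vertex cover of the underlying undirected graph (covers edges and arcs). -/
def IsVertexCover (G : MixedGraph V) (C : Finset V) : Prop :=
  ∀ u v, G.Edge u v ∨ G.Arc u v → u ∈ C ∨ v ∈ C

/-- Vertex cover number. -/
noncomputable def vc (G : MixedGraph V) : ℕ :=
  sInf {n | ∃ C : Finset V, C.card = n ∧ G.IsVertexCover C}

/-- Transitive closure of a mixed graph without directed cycles: all transitive
arcs are added, and edges parallel to arcs are removed. -/
def tc (G : MixedGraph V) (hG : G.Acyclic) : MixedGraph V where
  Edge u v := G.Edge u v ∧ ¬ Relation.TransGen G.Arc u v ∧ ¬ Relation.TransGen G.Arc v u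
  Arc u v := Relation.TransGen G.Arc u v
  edge_symm := fun u v h => ⟨G.edge_symm u v h.1, h.2.2, h.2.1⟩
  edge_irrefl := fun v h => G.edge_irrefl v h.1
  arc_irrefl := hG
  not_edge_arc := fun u v h hE => hE.2.1 h

/-- Induced mixed subgraph. -/
def induce (G : MixedGraph V) (S : Set V) : MixedGraph S where
  Edge u v := G.Edge u.1 v.1
  Arc u v := G.Arc u.1 v.1
  edge_symm := fun u v h => G.edge_symm u.1 v.1 h
  edge_irrefl := fun v => G.edge_irrefl v.1
  arc_irrefl := fun v => G.arc_irrefl v.1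
  not_edge_arc := fun u v => G.not_edge_arc u.1 v.1

/-- `I` is an independent set of the subgraph induced by `S`. -/
def IndepIn (G : MixedGraph V) (S I : Set V) : Prop :=
  I ⊆ S ∧ ∀ u ∈ I, ∀ v ∈ I, ¬ G.Edge u v ∧ ¬ G.Arc u v

/-- `I` is a maximal independent set of the subgraph induced by `S`. -/
def MaximalIndepIn (G : MixedGraph V) (S I : Set V) : Prop :=
  G.IndepIn S I ∧ ∀ J, G.IndepIn S J → I ⊆ J → J = I

/-- Clique number of the underlying undirected graph. -/
noncomputable def cliqueNum (G : MixedGraph V) : ℕ :=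
  sSup {n | ∃ s : Finset V, G.underlying.IsNClique n s}

end MixedGraph


/-!
Vertices of the same mixed type have the same out-neighbours. If `p i` and `p j` (with `i < j`)
had the same type, the arc `p i → p (i+1)` would give an arc `p j → p (i+1)`, closing the directed
walk `p (i+1) → ⋯ → p j` into a directed cycle. So the `ℓ + 1` vertices of the path lie in
pairwise different classes.
-/

namespace MixedGraph

variable {V : Type} (G : MixedGraph V)

theorem sameType_refl (u : V) : G.SameType u u := ⟨rfl, rfl, rfl⟩

variable {G}

theorem SameType.symm {u v : V} (h : G.SameType u v) : G.SameType v u :=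
  ⟨h.1.symm, h.2.1.symm, h.2.2.symm⟩

theorem SameType.nu_diff_subset {u v w : V} (huw : u ≠ w) (huv : G.SameType u v)
    (hvw : G.SameType v w) : G.Nu u \ {w} ⊆ G.Nu w \ {u} := by
  rintro x ⟨hxu, hxw⟩
  have hxu' : x ≠ u := fun h => G.edge_irrefl u (h ▸ hxu)
  by_cases hxv : x = v
  · subst hxv
    -- `x = v` is adjacent to `u`, so `u` is adjacent to `w`, so `w` is adjacent to `v`.
    have hu : u ∈ G.Nu x \ {w} := ⟨G.edge_symm _ _ hxu, huw⟩
    rw [hvw.2.2] at hu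
    have hw : w ∈ G.Nu u \ {x} := ⟨G.edge_symm _ _ hu.1, Ne.symm hxw⟩
    rw [huv.2.2] at hw
    exact ⟨G.edge_symm _ _ hw.1, hxu'⟩
  · have hx : x ∈ G.Nu u \ {v} := ⟨hxu, hxv⟩
    rw [huv.2.2] at hx
    have hx' : x ∈ G.Nu v \ {w} := ⟨hx.1, hxw⟩
    rw [hvw.2.2] at hx'
    exact ⟨hx'.1, hxu'⟩

theorem SameType.trans {u v w : V} (huv : G.SameType u v) (hvw : G.SameType v w) :
    G.SameType u w := by
  by_cases huw : u = w
  · exact huw ▸ sameType_refl G u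
  exact ⟨huv.1.trans hvw.1, huv.2.1.trans hvw.2.1,
    (huv.nu_diff_subset huw hvw).antisymm (hvw.symm.nu_diff_subset (Ne.symm huw) huv.symm)⟩

variable (G) in
theorem sameType_equivalence : Equivalence G.SameType :=
  ⟨sameType_refl G, SameType.symm, SameType.trans⟩

theorem Acyclic.not_sameType_of_transGen (hG : G.Acyclic) {u v : V}
    (huv : Relation.TransGen G.Arc u v) : ¬ G.SameType u v := by
  intro hst
  obtain ⟨w, huw, hwv⟩ := Relation.TransGen.head'_iff.mp huv
  have hvw : G.Arc v w := by
    change w ∈ G.Nplus v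
    exact hst.2.1 ▸ huw
  exact hG w (Relation.TransGen.tail' hwv hvw)

theorem card_le_ndm_of_pairwise_not_sameType [Finite V] {ι : Type} (f : ι → V)
    (hf : Pairwise fun i j => ¬ G.SameType (f i) (f j)) : Nat.card ι ≤ G.ndm := by
  have : Finite (Quot G.SameType) := Finite.of_surjective _ Quot.mk_surjective
  refine Nat.card_le_card_of_injective (fun i => Quot.mk G.SameType (f i)) fun i j hij => ?_
  by_contra hne
  exact hf hne ((sameType_equivalence G).eqvGen_iff.mp (Quot.eq.mp hij))

end MixedGraph

theorem stmt0 {V : Type} [Fintype V] (G : MixedGraph V) (hG : G.Acyclic)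
    (ℓ : ℕ) (p : ℕ → V) (hp : ∀ i < ℓ, G.Arc (p i) (p (i + 1))) :
    (∀ i ≤ ℓ, ∀ j ≤ ℓ, i ≠ j → ¬ G.SameType (p i) (p j)) ∧ ℓ + 1 ≤ G.ndm := by
  have hpath : ∀ i j, i < j → j ≤ ℓ → Relation.TransGen G.Arc (p i) (p j) := fun i j hij hj =>
    (transGen_of_succ_of_lt (fun a b => G.Arc (p a) (p b))
      (fun k hk => hp k (by simp only [Set.mem_Ico] at hk; omega)) hij).lift p fun _ _ h => h
  have hdist : ∀ i ≤ ℓ, ∀ j ≤ ℓ, i ≠ j → ¬ G.SameType (p i) (p j) := by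
    intro i hi j hj hij hst
    rcases hij.lt_or_gt with h | h
    · exact hG.not_sameType_of_transGen (hpath i j h hj) hst
    · exact hG.not_sameType_of_transGen (hpath j i h hi) hst.symm
  refine ⟨hdist, ?_⟩
  simpa using G.card_le_ndm_of_pairwise_not_sameType (fun i : Fin (ℓ + 1) => p i)
    fun i j hij => hdist i (by omega) j (by omega) (Fin.val_ne_of_ne hij)
end

section
/- For any mixed graph G without directed cycles with a vertex cover of size k (in the underlying undirected graph, where arcs are also counted as covered pairs), the mixed neighborhood diversity of G is at most k + 4^k. -/
/-!
A vertex outside the vertex cover `C` has all of its neighbours in `C`, so its mixed type is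
determined by how it relates to each `x ∈ C`: no relation, an arc from `x`, an arc to `x`, or an
edge. Since there are no directed 2-cycles these four cases are exclusive, so the vertices outside
`C` have at most `4 ^ |C|` types, and the vertices of `C` add at most `|C|` more.
-/

namespace MixedGraph

variable {V : Type} {G : MixedGraph V}

theorem Acyclic.not_arc_of_arc (hG : G.Acyclic) {a b : V} (hab : G.Arc a b) : ¬ G.Arc b a :=
  fun hba => hG a ((Relation.TransGen.single hab).tail hba)

noncomputable def relCode (G : MixedGraph V) (x w : V) : Fin 4 :=
  open Classical in
  if G.Arc x w then 1 else if G.Arc w x then 2 else if G.Edge x w then 3 else 0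

theorem relCode_eq_one_iff (x w : V) : G.relCode x w = 1 ↔ G.Arc x w := by
  unfold relCode
  split_ifs <;> simp_all

theorem relCode_eq_two_iff (hG : G.Acyclic) (x w : V) : G.relCode x w = 2 ↔ G.Arc w x := by
  unfold relCode
  split_ifs with hxw
  · simpa using hG.not_arc_of_arc hxw
  all_goals simp_all

theorem relCode_eq_three_iff (x w : V) : G.relCode x w = 3 ↔ G.Edge x w := by
  unfold relCode
  split_ifs with hxw hwx
  · simpa using G.not_edge_arc x w hxw
  · simpa using fun h => G.not_edge_arc w x hwx (G.edge_symm x w h)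
  all_goals simp_all

theorem setOf_eq_of_relCode_eq {C : Finset V} {R : V → V → Prop} {k : Fin 4}
    (hR : ∀ x w, G.relCode x w = k ↔ R x w) (hRC : ∀ x w, R x w → x ∈ C ∨ w ∈ C)
    {u v : V} (hu : u ∉ C) (hv : v ∉ C) (h : ∀ x ∈ C, G.relCode x u = G.relCode x v) :
    {x | R x u} = {x | R x v} := by
  ext x
  have transfer : ∀ {a b}, a ∉ C → (∀ y ∈ C, G.relCode y a = G.relCode y b) → R x a → R x b :=
    fun ha hab hxa => (hR x _).1 (hab x ((hRC x _ hxa).resolve_right ha) ▸ (hR x _).2 hxa)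
  exact ⟨transfer hu h, transfer hv fun y hy => (h y hy).symm⟩

theorem sameType_of_relCode_eq (hG : G.Acyclic) {C : Finset V} (hC : G.IsVertexCover C)
    {u v : V} (hu : u ∉ C) (hv : v ∉ C) (h : ∀ x ∈ C, G.relCode x u = G.relCode x v) :
    G.SameType u v := by
  have hNu : G.Nu u = G.Nu v :=
    setOf_eq_of_relCode_eq relCode_eq_three_iff (fun x w hxw => hC x w (Or.inl hxw)) hu hv h
  refine ⟨setOf_eq_of_relCode_eq relCode_eq_one_iff (fun x w hxw => hC x w (Or.inr hxw)) hu hv h,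
    setOf_eq_of_relCode_eq (relCode_eq_two_iff hG) (fun x w hwx => (hC w x (Or.inr hwx)).symm)
      hu hv h, ?_⟩
  rw [Set.sdiff_singleton_eq_self (hNu ▸ G.edge_irrefl v),
    Set.sdiff_singleton_eq_self (hNu.symm ▸ G.edge_irrefl u), hNu]

noncomputable def coverType (G : MixedGraph V) (C : Finset V) (v : V) : C ⊕ (C → Fin 4) :=
  open Classical in
  if hv : v ∈ C then .inl ⟨v, hv⟩ else .inr fun x => G.relCode x v

theorem sameType_of_coverType_eq (hG : G.Acyclic) {C : Finset V} (hC : G.IsVertexCover C)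
    {u v : V} (h : G.coverType C u = G.coverType C v) : G.SameType u v := by
  unfold coverType at h
  split_ifs at h with hu hv hv
  · obtain rfl : u = v := congrArg Subtype.val (Sum.inl_injective h)
    exact ⟨rfl, rfl, rfl⟩
  · exact sameType_of_relCode_eq hG hC hu hv fun x hx => congrFun (Sum.inr_injective h) ⟨x, hx⟩

theorem ndm_le_card_of_sameType {α : Type*} [Finite α] (f : V → α)
    (hf : ∀ u v, f u = f v → G.SameType u v) : G.ndm ≤ Nat.card α := by
  refine Nat.card_le_card_of_injective (fun q => f q.out) fun q q' hqq' => ?_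
  rw [← Quot.out_eq q, ← Quot.out_eq q']
  exact Quot.sound (hf _ _ hqq')

end MixedGraph

theorem stmt2_general {V : Type} (G : MixedGraph V) (hG : G.Acyclic)
    (C : Finset V) (hC : G.IsVertexCover C) :
    G.ndm ≤ C.card + 4 ^ C.card := by
  calc G.ndm ≤ Nat.card (C ⊕ (C → Fin 4)) :=
        MixedGraph.ndm_le_card_of_sameType _ fun _ _ => MixedGraph.sameType_of_coverType_eq hG hC
    _ = C.card + 4 ^ C.card := by simp [Nat.card_sum, Nat.card_fun]

theorem stmt2 {V : Type} [Fintype V] (G : MixedGraph V) (hG : G.Acyclic)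
    (C : Finset V) (hC : G.IsVertexCover C) :
    G.ndm ≤ C.card + 4 ^ C.card :=
  stmt2_general G hG C hC
end

section
/- For any mixed graph G without directed cycles, if two vertices u and v have the same mixed type in G, then they have the same mixed type in the transitive closure G⁺ of G. Consequently, the mixed neighborhood diversity of G⁺ is at most the mixed neighborhood diversity of G. -/
/-! A directed path out of `u` begins with an out-arc of `u` and a path into `u` ends with an
in-arc, so twins of `G` keep equal in- and out-neighbourhoods in `G⁺`; and `G⁺` removes from the
undirected neighbourhood of a vertex exactly its `G⁺`-arc neighbours, which the twins share. -/

theorem Relation.transGen_iff_of_forall_iff_left {α : Type*} {r : α → α → Prop} {a b : α}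
    (h : ∀ x, r a x ↔ r b x) (w : α) : Relation.TransGen r a w ↔ Relation.TransGen r b w := by
  simp only [Relation.TransGen.head'_iff, h]

theorem Relation.transGen_iff_of_forall_iff_right {α : Type*} {r : α → α → Prop} {a b : α}
    (h : ∀ x, r x a ↔ r x b) (w : α) : Relation.TransGen r w a ↔ Relation.TransGen r w b := by
  simp only [Relation.TransGen.tail'_iff, h]

namespace MixedGraph

variable {V : Type}

theorem nu_tc (G : MixedGraph V) (hG : G.Acyclic) (v : V) :
    (G.tc hG).Nu v = G.Nu v \ ((G.tc hG).Nminus v ∪ (G.tc hG).Nplus v) := by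
  ext w
  simp [Nu, Nminus, Nplus, tc]

theorem SameType.tc {G : MixedGraph V} (hG : G.Acyclic) {u v : V} (h : G.SameType u v) :
    (G.tc hG).SameType u v := by
  obtain ⟨hminus, hplus, hu⟩ := h
  have hminus' : (G.tc hG).Nminus u = (G.tc hG).Nminus v :=
    Set.ext (Relation.transGen_iff_of_forall_iff_right (Set.ext_iff.mp hminus))
  have hplus' : (G.tc hG).Nplus u = (G.tc hG).Nplus v :=
    Set.ext (Relation.transGen_iff_of_forall_iff_left (Set.ext_iff.mp hplus))
  refine ⟨hminus', hplus', ?_⟩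
  rw [nu_tc, nu_tc, Set.sdiff_sdiff_comm, hu, Set.sdiff_sdiff_comm, hminus', hplus']

theorem ndm_le_ndm_of_sameType_imp [Finite V] {G H : MixedGraph V}
    (h : ∀ ⦃u v⦄, G.SameType u v → H.SameType u v) : H.ndm ≤ G.ndm :=
  Nat.card_le_card_of_surjective _ (Quot.map_surjective h Function.surjective_id)

end MixedGraph

theorem stmt3 {V : Type} [Fintype V] (G : MixedGraph V) (hG : G.Acyclic) :
    (∀ u v, G.SameType u v → (G.tc hG).SameType u v) ∧ (G.tc hG).ndm ≤ G.ndm :=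
  ⟨fun _ _ h => h.tc hG, MixedGraph.ndm_le_ndm_of_sameType_imp fun _ _ h => h.tc hG⟩
end

section
/- For every ℓ ≥ 1 there exists a mixed graph G_ℓ without directed cycles whose underlying undirected graph is the complete graph on ℓ vertices (hence undirected neighborhood diversity 1), but whose mixed neighborhood diversity is at least ℓ. -/
/-! Orienting a Hamiltonian path of `K_ℓ` keeps the underlying graph complete, so all vertices
share one undirected type. In a mixed graph without directed cycles, however, the vertices
`p 0, …, p (n-1)` of a directed path have pairwise distinct out-neighbourhoods: if `p i` and
`p j` with `i < j` had the same ones, then `p j → p (i+1) → ⋯ → p j` would be a directed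
cycle. -/

namespace MixedGraph

variable {V : Type} {G : MixedGraph V}

theorem acyclic_of_arc_lt {α : Type*} [Preorder α] (f : V → α)
    (hf : ∀ u v, G.Arc u v → f u < f v) : G.Acyclic := fun v hv =>
  lt_irrefl (f v) <| by simpa only [Relation.transGen_eq_self] using hv.lift f hf

theorem ndu_eq_one_of_underlying_eq_top [Nonempty V] (h : G.underlying = ⊤) : G.ndu = 1 := by
  have hsame (u v : V) : G.USameType u v := by
    ext w
    simp only [h, SimpleGraph.neighborSet_top, Set.mem_sdiff, Set.mem_compl_iff,
      Set.mem_singleton_iff]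
    tauto
  have : Subsingleton (Quot G.USameType) :=
    ⟨Quot.ind fun u => Quot.ind fun v => Quot.sound (hsame u v)⟩
  have : Nonempty (Quot G.USameType) := ⟨Quot.mk _ (Classical.arbitrary V)⟩
  exact Nat.card_unique

def IsArcPath (G : MixedGraph V) (p : ℕ → V) (n : ℕ) : Prop :=
  ∀ i, i + 1 < n → G.Arc (p i) (p (i + 1))

section Path

variable {p : ℕ → V} {n : ℕ}

theorem IsArcPath.reflTransGen (hp : G.IsArcPath p n) {i j : ℕ} (hij : i ≤ j) (hj : j < n) :
    Relation.ReflTransGen G.Arc (p i) (p j) :=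
  (reflTransGen_of_succ_of_le (fun a b => G.Arc (p a) (p b))
    (fun k hk => hp k (by rw [Set.mem_Ico] at hk; omega)) hij).lift p fun _ _ h => h

theorem IsArcPath.nplus_ne (hp : G.IsArcPath p n) (hG : G.Acyclic) {i j : ℕ} (hij : i < j)
    (hj : j < n) : G.Nplus (p i) ≠ G.Nplus (p j) := by
  intro h
  have hback : G.Arc (p j) (p (i + 1)) := (h ▸ hp i (by omega) : p (i + 1) ∈ G.Nplus (p j))
  exact hG _ (.head' hback (hp.reflTransGen (by omega) hj))

theorem IsArcPath.le_ndm [Finite V] (hp : G.IsArcPath p n) (hG : G.Acyclic) : n ≤ G.ndm := by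
  let nplus : Quot G.SameType → Set V := Quot.lift G.Nplus fun _ _ h => h.2.1
  have hinj : Function.Injective fun i : Fin n => Quot.mk G.SameType (p i) := by
    intro i j hij
    have hnplus := congrArg nplus hij
    rcases lt_trichotomy i j with h | h | h
    · exact absurd hnplus (hp.nplus_ne hG h j.2)
    · exact h
    · exact absurd hnplus.symm (hp.nplus_ne hG h i.2)
  simpa [ndm] using Nat.card_le_card_of_injective _ hinj

end Path

/-- The paper's `G_ℓ`. -/
def completeHamPath (ℓ : ℕ) : MixedGraph (Fin ℓ) where
  Edge u v := u ≠ v ∧ (u : ℕ) + 1 ≠ v ∧ (v : ℕ) + 1 ≠ u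
  Arc u v := (u : ℕ) + 1 = v
  edge_symm _ _ h := ⟨h.1.symm, h.2.2, h.2.1⟩
  edge_irrefl _ h := h.1 rfl
  arc_irrefl _ h := by omega
  not_edge_arc _ _ h hE := hE.2.1 h

theorem acyclic_completeHamPath (ℓ : ℕ) : (completeHamPath ℓ).Acyclic :=
  acyclic_of_arc_lt Fin.val fun u v (h : (u : ℕ) + 1 = v) => by omega

theorem underlying_completeHamPath (ℓ : ℕ) : (completeHamPath ℓ).underlying = ⊤ := by
  ext u v
  simp only [underlying, completeHamPath, SimpleGraph.top_adj, ne_eq, Fin.ext_iff]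
  omega

end MixedGraph

theorem stmt5 (ℓ : ℕ) (hℓ : 1 ≤ ℓ) :
    ∃ G : MixedGraph (Fin ℓ), G.Acyclic ∧ G.underlying = ⊤ ∧ G.ndu = 1 ∧ ℓ ≤ G.ndm := by
  open MixedGraph in
  have : Nonempty (Fin ℓ) := ⟨⟨0, hℓ⟩⟩
  refine ⟨completeHamPath ℓ, acyclic_completeHamPath ℓ, underlying_completeHamPath ℓ,
    ndu_eq_one_of_underlying_eq_top (underlying_completeHamPath ℓ), ?_⟩
  have hpath : (completeHamPath ℓ).IsArcPath (fun i => ⟨min i (ℓ - 1), by omega⟩) ℓ :=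
    fun i _ => show min i (ℓ - 1) + 1 = min (i + 1) (ℓ - 1) by omega
  exact hpath.le_ndm (acyclic_completeHamPath ℓ)
end

section
/- For every non-empty mixed graph G without directed cycles, the number of maximal independent sets in the subgraph induced by the vertices of inrank 0 is at most (ω(G)+1)^{nd_u(G)}, where ω(G) is the clique number and nd_u(G) the neighborhood diversity of the underlying undirected graph. -/
/-!
Vertices `u, v` of a graph are twins when `N(u) \ {v} = N(v) \ {u}`; twinship is an equivalence
whose classes (the neighborhood-diversity classes) are cliques or independent sets. A maximal
independent subset `I` of any vertex set `S` meets a clique class `C` in at most one vertex, and an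
independent class `C` either not at all or in all of `S ∩ C`, since a twin of a vertex of `I` has
no neighbor in `I`. So each class admits at most `ω + 1` traces `I ∩ C`, and `I` is determined by
its traces.
-/

namespace SimpleGraph

variable {V : Type} {H : SimpleGraph V} {C I S : Set V} {u v w x : V}

def Twins (H : SimpleGraph V) (u v : V) : Prop :=
  H.neighborSet u \ {v} = H.neighborSet v \ {u}

theorem Twins.symm (h : H.Twins u v) : H.Twins v u :=
  Eq.symm h

theorem Twins.adj_of_adj (h : H.Twins u v) (hx : H.Adj u x) (hxv : x ≠ v) : H.Adj v x := by
  have hx' : x ∈ H.neighborSet u \ {v} := ⟨hx, hxv⟩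
  rw [h] at hx'
  exact hx'.1

theorem Twins.adj_of_adj_of_twins (huv : H.Twins u v) (hvw : H.Twins v w) (hx : H.Adj u x)
    (hxw : x ≠ w) : H.Adj w x := by
  rcases eq_or_ne x v with rfl | hxv
  · rcases eq_or_ne u w with rfl | huw
    · exact hx
    · exact (huv.adj_of_adj (hvw.adj_of_adj hx.symm huw).symm hxw.symm).symm
  · exact hvw.adj_of_adj (huv.adj_of_adj hx hxv) hxw

theorem Twins.trans (huv : H.Twins u v) (hvw : H.Twins v w) : H.Twins u w := by
  ext x
  constructor
  · rintro ⟨hx, hxw⟩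
    exact ⟨huv.adj_of_adj_of_twins hvw hx hxw, hx.ne.symm⟩
  · rintro ⟨hx, hxu⟩
    exact ⟨hvw.symm.adj_of_adj_of_twins huv.symm hx hxu, hx.ne.symm⟩

theorem twins_equivalence : Equivalence H.Twins :=
  ⟨fun _ => rfl, Twins.symm, Twins.trans⟩

abbrev IsMaximalIndepSetIn (H : SimpleGraph V) (S I : Set V) : Prop :=
  Maximal (fun J => J ⊆ S ∧ H.IsIndepSet J) I

def twinClass (q : Quot H.Twins) : Set V :=
  {v | Quot.mk H.Twins v = q}

theorem twins_of_mem_twinClass {q : Quot H.Twins} (hu : u ∈ twinClass q)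
    (hv : v ∈ twinClass q) : H.Twins u v :=
  twins_equivalence.eqvGen_iff.mp (Quot.eqvGen_exact (hu.trans hv.symm))

theorem isClique_of_twins_of_adj (hC : ∀ a ∈ C, ∀ b ∈ C, H.Twins a b) (hu : u ∈ C)
    (hv : v ∈ C) (huv : H.Adj u v) : H.IsClique C := by
  intro a ha b hb hab
  rcases eq_or_ne a v with rfl | hav
  · exact ((hC u hu b hb).adj_of_adj huv hab).symm
  · have hav' : H.Adj a v := (hC u hu a ha).adj_of_adj huv hav.symm
    exact ((hC v hv b hb).adj_of_adj hav'.symm hab).symm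

theorem IsClique.ncard_le_cliqueNum [Finite V] (hC : H.IsClique C) : C.ncard ≤ H.cliqueNum := by
  rw [Set.ncard_eq_toFinset_card C C.toFinite]
  exact IsClique.card_le_cliqueNum (tc := by rwa [Set.Finite.coe_toFinset])

theorem IsIndepSet.subsingleton_inter (hI : H.IsIndepSet I) (hC : H.IsClique C) :
    (I ∩ C).Subsingleton :=
  fun a ha b hb => by_contra fun hab => hI ha.1 hb.1 hab (hC ha.2 hb.2 hab)

theorem Twins.mem_of_isMaximalIndepSetIn (hI : H.IsMaximalIndepSetIn S I) (hu : u ∈ I)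
    (hv : v ∈ S) (huv : H.Twins u v) (hnadj : ¬ H.Adj u v) : v ∈ I := by
  have hvI : ∀ b ∈ I, ¬ H.Adj v b := by
    intro b hb hvb
    rcases eq_or_ne b u with rfl | hbu
    · exact hnadj hvb.symm
    · exact hI.prop.2 hu hb hbu.symm (huv.symm.adj_of_adj hvb hbu)
  refine hI.mem_of_prop_insert ⟨Set.insert_subset hv hI.prop.1, hI.prop.2.insert ?_⟩
  exact fun b hb _ => ⟨hvI b hb, fun hbv => hvI b hb hbv.symm⟩

theorem inter_twinClass_eq_empty_or_eq (hI : H.IsMaximalIndepSetIn S I)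
    {q : Quot H.Twins} (hq : ¬ H.IsClique (twinClass q)) :
    I ∩ twinClass q = ∅ ∨ I ∩ twinClass q = S ∩ twinClass q := by
  refine (Set.eq_empty_or_nonempty _).imp_right fun ⟨u, huI, huq⟩ => ?_
  refine subset_antisymm (Set.inter_subset_inter_left _ hI.prop.1)
    fun v ⟨hvS, hvq⟩ => ⟨?_, hvq⟩
  rcases eq_or_ne u v with rfl | huv
  · exact huI
  · refine (twins_of_mem_twinClass huq hvq).mem_of_isMaximalIndepSetIn hI huI hvS fun hadj => hq ?_
    exact isClique_of_twins_of_adj (fun _ ha _ hb => twins_of_mem_twinClass ha hb) huq hvq hadj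

theorem ncard_range_inter_twinClass_le [Finite V] (q : Quot H.Twins) :
    (Set.range fun I : {I : Set V // H.IsMaximalIndepSetIn S I} => I.1 ∩ twinClass q).ncard ≤
      H.cliqueNum + 1 := by
  by_cases hq : H.IsClique (twinClass q)
  · calc _ ≤ (insert ∅ ((fun u : V => ({u} : Set V)) '' twinClass q)).ncard := by
          refine Set.ncard_le_ncard ?_ (Set.toFinite _)
          rintro _ ⟨I, rfl⟩
          obtain h | ⟨u, hu⟩ := (I.2.prop.2.subsingleton_inter hq).eq_empty_or_singleton
          · exact Or.inl h
          · exact Or.inr ⟨u, (hu.ge rfl).2, hu.symm⟩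
      _ ≤ (twinClass q).ncard + 1 :=
          (Set.ncard_insert_le _ _).trans (by gcongr; exact Set.ncard_image_le (Set.toFinite _))
      _ ≤ H.cliqueNum + 1 := by grw [hq.ncard_le_cliqueNum]
  · obtain ⟨v, -⟩ := q.exists_rep
    calc _ ≤ ({∅, S ∩ twinClass q} : Set (Set V)).ncard := by
          refine Set.ncard_le_ncard ?_ (Set.toFinite _)
          rintro _ ⟨I, rfl⟩
          exact inter_twinClass_eq_empty_or_eq I.2 hq
      _ ≤ 1 + 1 := Set.ncard_insert_le _ _ |>.trans (by rw [Set.ncard_singleton])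
      _ ≤ H.cliqueNum + 1 := by simpa using (isClique_singleton (G := H) v).ncard_le_cliqueNum

theorem card_isMaximalIndepSetIn_le [Finite V] (H : SimpleGraph V) (S : Set V) :
    Nat.card {I : Set V // H.IsMaximalIndepSetIn S I} ≤
      (H.cliqueNum + 1) ^ Nat.card (Quot H.Twins) := by
  have : Fintype (Quot H.Twins) := Fintype.ofFinite _
  let traces (q : Quot H.Twins) :=
    Set.range fun I : {I : Set V // H.IsMaximalIndepSetIn S I} => I.1 ∩ twinClass q
  have htraces : Function.Injective fun I q => (⟨I.1 ∩ twinClass q, I, rfl⟩ : traces q) := by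
    intro I J hIJ
    ext v
    have hv := congrArg (fun t => v ∈ (t (Quot.mk H.Twins v)).1) hIJ
    simpa [twinClass] using hv
  calc _ ≤ Nat.card (∀ q, traces q) := Nat.card_le_card_of_injective _ htraces
    _ = ∏ q, (traces q).ncard := Nat.card_pi
    _ ≤ (H.cliqueNum + 1) ^ Finset.univ.card :=
        Finset.prod_le_pow_card _ _ _ fun q _ => ncard_range_inter_twinClass_le q
    _ = _ := by rw [Finset.card_univ, Nat.card_eq_fintype_card]

end SimpleGraph

namespace MixedGraph

variable {V : Type} (G : MixedGraph V) {S I : Set V}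

theorem indepIn_iff : G.IndepIn S I ↔ I ⊆ S ∧ G.underlying.IsIndepSet I := by
  refine and_congr_right fun _ => ⟨fun h u hu v hv _ hadj => ?_, fun h u hu v hv => ?_⟩
  · rcases hadj with he | ha | ha
    exacts [(h u hu v hv).1 he, (h u hu v hv).2 ha, (h v hv u hu).2 ha]
  · rcases eq_or_ne u v with rfl | huv
    · exact ⟨G.edge_irrefl u, G.arc_irrefl u⟩
    · exact ⟨fun he => h hu hv huv (Or.inl he), fun ha => h hu hv huv (Or.inr (Or.inl ha))⟩

theorem maximalIndepIn_iff :
    G.MaximalIndepIn S I ↔ G.underlying.IsMaximalIndepSetIn S I := by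
  simp only [MaximalIndepIn, maximal_subset_iff, indepIn_iff]
  exact and_congr_right fun _ => forall_congr' fun _ => imp_congr_right fun _ =>
    imp_congr_right fun _ => eq_comm

end MixedGraph

theorem stmt13_general {V : Type} [Fintype V] (G : MixedGraph V) :
    Nat.card {I : Set V // G.MaximalIndepIn {v | G.inrank v = 0} I} ≤
      (G.cliqueNum + 1) ^ G.ndu := by
  rw [Nat.card_congr (Equiv.subtypeEquivRight fun I => G.maximalIndepIn_iff)]
  exact G.underlying.card_isMaximalIndepSetIn_le _

theorem stmt13 {V : Type} [Fintype V] [Nonempty V] (G : MixedGraph V) (hG : G.Acyclic) :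
    Nat.card {I : Set V // G.MaximalIndepIn {v | G.inrank v = 0} I} ≤
      (G.cliqueNum + 1) ^ G.ndu :=
  stmt13_general G
end

section
/- There exists a mixed graph G̃ without directed cycles (namely the star K_{1,2} with the center joined to one leaf by an undirected edge and to the other leaf by an outgoing arc) with mixed cliquewidth exactly 3, whose corresponding directed graph D(G̃) (obtained by replacing each edge by a pair of opposite arcs) has directed cliquewidth 2. -/
/-- A labeled mixed graph: the intermediate object of a clique-width expression. -/
structure LGraph (V L : Type) where
  verts : Set V
  lab : V → L
  Edge : V → V → Prop
  Arc : V → V → Prop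

/-- Mixed clique-width expressions over label set `L` and vertex names `V`. -/
inductive MCExpr (L V : Type) where
  | vertex (v : V) (l : L)
  | union (a b : MCExpr L V)
  | eta (i j : L) (a : MCExpr L V)
  | alpha (i j : L) (a : MCExpr L V)
  | relabel (i j : L) (a : MCExpr L V)

open Classical in
/-- Evaluation of a mixed clique-width expression. -/
noncomputable def MCExpr.eval {L V : Type} : MCExpr L V → LGraph V L
  | .vertex v l => ⟨{v}, fun _ => l, fun _ _ => False, fun _ _ => False⟩
  | .union a b =>
      ⟨a.eval.verts ∪ b.eval.verts,
        fun x => if x ∈ a.eval.verts then a.eval.lab x else b.eval.lab x,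
        fun u v => a.eval.Edge u v ∨ b.eval.Edge u v,
        fun u v => a.eval.Arc u v ∨ b.eval.Arc u v⟩
  | .eta i j a =>
      ⟨a.eval.verts, a.eval.lab,
        fun u v => a.eval.Edge u v ∨ (u ∈ a.eval.verts ∧ v ∈ a.eval.verts ∧
          ((a.eval.lab u = i ∧ a.eval.lab v = j) ∨ (a.eval.lab u = j ∧ a.eval.lab v = i))),
        a.eval.Arc⟩
  | .alpha i j a =>
      ⟨a.eval.verts, a.eval.lab, a.eval.Edge,
        fun u v => a.eval.Arc u v ∨ (u ∈ a.eval.verts ∧ v ∈ a.eval.verts ∧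
          a.eval.lab u = i ∧ a.eval.lab v = j)⟩
  | .relabel i j a =>
      ⟨a.eval.verts, fun x => if a.eval.lab x = i then j else a.eval.lab x,
        a.eval.Edge, a.eval.Arc⟩

/-- Well-formedness: unions are disjoint, edge/arc operations use distinct labels. -/
def MCExpr.WF {L V : Type} : MCExpr L V → Prop
  | .vertex _ _ => True
  | .union a b => a.WF ∧ b.WF ∧ a.eval.verts ∩ b.eval.verts = ∅
  | .eta i j a => a.WF ∧ i ≠ j
  | .alpha i j a => a.WF ∧ i ≠ j
  | .relabel _ _ a => a.WF

/-- An expression using no arc operations (an undirected clique-width expression). -/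
def MCExpr.ArcFree {L V : Type} : MCExpr L V → Prop
  | .vertex _ _ => True
  | .union a b => a.ArcFree ∧ b.ArcFree
  | .eta _ _ a => a.ArcFree
  | .alpha _ _ _ => False
  | .relabel _ _ a => a.ArcFree

/-- An expression using no edge operations (a directed clique-width expression). -/
def MCExpr.EtaFree {L V : Type} : MCExpr L V → Prop
  | .vertex _ _ => True
  | .union a b => a.EtaFree ∧ b.EtaFree
  | .eta _ _ _ => False
  | .alpha _ _ a => a.EtaFree
  | .relabel _ _ a => a.EtaFree

/-- `e` is a well-formed expression constructing the mixed graph with edge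
relation `E` and arc relation `A` on all of `V`. -/
def MCExpr.Builds {L V : Type} (e : MCExpr L V) (E A : V → V → Prop) : Prop :=
  e.WF ∧ e.eval.verts = Set.univ ∧
    (∀ u v, e.eval.Edge u v ↔ E u v) ∧ (∀ u v, e.eval.Arc u v ↔ A u v)

lemma fin_two_eq_or_eq_of_ne {a b : Fin 2} (hab : a ≠ b) (c : Fin 2) : c = a ∨ c = b := by
  omega

namespace MCExpr

variable {L V : Type}

lemma mem_verts_of_edge (e : MCExpr L V) {u v : V} (h : e.eval.Edge u v) :
    u ∈ e.eval.verts ∧ v ∈ e.eval.verts := by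
  induction e with
  | vertex => exact h.elim
  | union a b iha ihb =>
    rcases h with h | h
    · exact ⟨Or.inl (iha h).1, Or.inl (iha h).2⟩
    · exact ⟨Or.inr (ihb h).1, Or.inr (ihb h).2⟩
  | eta _ _ a ih =>
    rcases h with h | ⟨hu, hv, -⟩
    exacts [ih h, ⟨hu, hv⟩]
  | alpha _ _ a ih => exact ih h
  | relabel _ _ a ih => exact ih h

lemma mem_verts_of_arc (e : MCExpr L V) {u v : V} (h : e.eval.Arc u v) :
    u ∈ e.eval.verts ∧ v ∈ e.eval.verts := by
  induction e with
  | vertex => exact h.elim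
  | union a b iha ihb =>
    rcases h with h | h
    · exact ⟨Or.inl (iha h).1, Or.inl (iha h).2⟩
    · exact ⟨Or.inr (ihb h).1, Or.inr (ihb h).2⟩
  | eta _ _ a ih => exact ih h
  | alpha _ _ a ih =>
    rcases h with h | ⟨hu, hv, -⟩
    exacts [ih h, ⟨hu, hv⟩]
  | relabel _ _ a ih => exact ih h

lemma not_arc_of_subsingleton [Subsingleton L] (e : MCExpr L V) (hWF : e.WF) (u v : V) :
    ¬ e.eval.Arc u v := by
  induction e with
  | vertex => exact id
  | union a b iha ihb => rintro (h | h); exacts [iha hWF.1 h, ihb hWF.2.1 h]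
  | eta _ _ a ih => exact ih hWF.1
  | alpha i j a _ => exact absurd (Subsingleton.elim i j) hWF.2
  | relabel _ _ a ih => exact ih hWF

lemma not_edge_and_arc_of_two_labels (e : MCExpr (Fin 2) V) (hWF : e.WF) {x y z : V}
    (hxy : x ≠ y) (hxz : x ≠ z) (hyz : y ≠ z)
    (hE : ∀ u v, e.eval.Edge u v → (u = x ∧ v = y) ∨ (u = y ∧ v = x))
    (hA : ∀ u v, e.eval.Arc u v → u = x ∧ v = z) :
    ¬ (e.eval.Edge x y ∧ e.eval.Arc x z) := by
  induction e with
  | vertex => exact fun h => h.1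
  | union a b iha ihb =>
    obtain ⟨wa, wb, hdisj⟩ := hWF
    have hx_not_both : x ∉ a.eval.verts ∩ b.eval.verts := hdisj ▸ Set.notMem_empty x
    rintro ⟨hea | heb, haa | hab⟩
    · exact iha wa (fun u v h => hE u v (Or.inl h)) (fun u v h => hA u v (Or.inl h)) ⟨hea, haa⟩
    · exact hx_not_both ⟨(a.mem_verts_of_edge hea).1, (b.mem_verts_of_arc hab).1⟩
    · exact hx_not_both ⟨(a.mem_verts_of_arc haa).1, (b.mem_verts_of_edge heb).1⟩
    · exact ihb wb (fun u v h => hE u v (Or.inr h)) (fun u v h => hA u v (Or.inr h)) ⟨heb, hab⟩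
  | eta i j a ih =>
    obtain ⟨wa, hij⟩ := hWF
    rintro ⟨hea | ⟨hx, hy, hlab⟩, haz⟩
    · exact ih wa (fun u v h => hE u v (Or.inl h)) hA ⟨hea, haz⟩
    have hz := (a.mem_verts_of_arc haz).2
    have hlab_ne : a.eval.lab x ≠ a.eval.lab y := by
      rcases hlab with ⟨h₁, h₂⟩ | ⟨h₁, h₂⟩ <;> rw [h₁, h₂] <;> tauto
    rcases fin_two_eq_or_eq_of_ne hlab_ne (a.eval.lab z) with hzx | hzy
    · have := hE z y (Or.inr ⟨hz, hy, by rwa [hzx]⟩)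
      tauto
    · have := hE x z (Or.inr ⟨hx, hz, by rwa [hzy]⟩)
      tauto
  | alpha i j a ih =>
    obtain ⟨wa, hij⟩ := hWF
    rintro ⟨hxy', haa | ⟨hx, hz, hxi, hzj⟩⟩
    · exact ih wa hE (fun u v h => hA u v (Or.inl h)) ⟨hxy', haa⟩
    have hy := (a.mem_verts_of_edge hxy').2
    rcases fin_two_eq_or_eq_of_ne hij (a.eval.lab y) with hyi | hyj
    · exact hxy (hA y z (Or.inr ⟨hy, hz, hyi, hzj⟩)).1.symm
    · exact hyz (hA x y (Or.inr ⟨hx, hy, hxi, hyj⟩)).2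
  | relabel _ _ a ih => exact ih hWF hE hA

end MCExpr

def starEdge (u v : Fin 3) : Prop := (u = 0 ∧ v = 1) ∨ (u = 1 ∧ v = 0)

def starArc (u v : Fin 3) : Prop := u = 0 ∧ v = 2

def mixedStarExpr : MCExpr (Fin 3) (Fin 3) :=
  .alpha 0 2 (.eta 0 1 (.union (.union (.vertex 0 0) (.vertex 1 1)) (.vertex 2 2)))

def directedStarExpr : MCExpr (Fin 2) (Fin 3) :=
  .alpha 0 1 (.union (.alpha 1 0 (.union (.vertex 0 0) (.vertex 1 1))) (.vertex 2 1))

lemma mixedStarExpr_builds : mixedStarExpr.Builds starEdge starArc := by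
  refine ⟨?_, ?_, ?_, ?_⟩
  · simp [mixedStarExpr, MCExpr.WF, MCExpr.eval]
  · ext x; fin_cases x <;> simp [mixedStarExpr, MCExpr.eval]
  · intro u v; fin_cases u <;> fin_cases v <;> simp [mixedStarExpr, MCExpr.eval, starEdge]
  · intro u v; fin_cases u <;> fin_cases v <;> simp [mixedStarExpr, MCExpr.eval, starArc]

lemma directedStarExpr_etaFree : directedStarExpr.EtaFree :=
  ⟨⟨trivial, trivial⟩, trivial⟩

lemma directedStarExpr_builds :
    directedStarExpr.Builds (fun _ _ => False) (fun u v => starArc u v ∨ starEdge u v) := by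
  refine ⟨?_, ?_, ?_, ?_⟩
  · simp [directedStarExpr, MCExpr.WF, MCExpr.eval]
  · ext x; fin_cases x <;> simp [directedStarExpr, MCExpr.eval]
  · intro u v; simp [directedStarExpr, MCExpr.eval]
  · intro u v
    fin_cases u <;> fin_cases v <;> simp [directedStarExpr, MCExpr.eval, starArc, starEdge]

theorem stmt17 :
    (∃ e : MCExpr (Fin 3) (Fin 3),
      e.Builds (fun u v => (u = 0 ∧ v = 1) ∨ (u = 1 ∧ v = 0)) (fun u v => u = 0 ∧ v = 2)) ∧
    (¬ ∃ e : MCExpr (Fin 2) (Fin 3),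
      e.Builds (fun u v => (u = 0 ∧ v = 1) ∨ (u = 1 ∧ v = 0)) (fun u v => u = 0 ∧ v = 2)) ∧
    (∃ e : MCExpr (Fin 2) (Fin 3), e.EtaFree ∧
      e.Builds (fun _ _ => False)
        (fun u v => (u = 0 ∧ v = 2) ∨ (u = 0 ∧ v = 1) ∨ (u = 1 ∧ v = 0))) ∧
    (¬ ∃ e : MCExpr (Fin 1) (Fin 3), e.EtaFree ∧
      e.Builds (fun _ _ => False)
        (fun u v => (u = 0 ∧ v = 2) ∨ (u = 0 ∧ v = 1) ∨ (u = 1 ∧ v = 0))) := by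
  refine ⟨⟨mixedStarExpr, mixedStarExpr_builds⟩, ?_, ⟨directedStarExpr, directedStarExpr_etaFree,
    directedStarExpr_builds⟩, ?_⟩
  · rintro ⟨e, hWF, -, hE, hA⟩
    exact e.not_edge_and_arc_of_two_labels hWF (by decide) (by decide) (by decide)
      (fun u v => (hE u v).1) (fun u v => (hA u v).1)
      ⟨(hE 0 1).2 (Or.inl ⟨rfl, rfl⟩), (hA 0 2).2 ⟨rfl, rfl⟩⟩
  · rintro ⟨e, -, hWF, -, -, hA⟩
    exact e.not_arc_of_subsingleton hWF 0 2 ((hA 0 2).2 (Or.inl ⟨rfl, rfl⟩))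
end
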